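/- Let G : D → ℝ^m be an objective map and U_c : D → ℝ a nonnegative penalty function, and define F(p) = (G(p), U_c(p)) ∈ ℝ^{m+1}. A point p* with U_c(p*) = 0 is Pareto optimal for the unconstrained problem min F if and only if p* is Pareto optimal for the constrained problem min G subject to U_c(p) = 0 (where feasible points are exactly those p with U_c(p) = 0). -/
import Mathlib


/-- Pareto dominance on `Fin d → ℝ`. -/
def Dom {d : ℕ} (u v : Fin d → ℝ) : Prop :=
  (∀ i, u i ≤ v i) ∧ ∃ j, u j < v j

/-- Equivalence between Pareto optimality of the penalized unconstrained problem
and Pareto optimality of the constrained problem. -/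
theorem stmt_3 {D : Type*} {m : ℕ}
    (G : D → Fin m → ℝ) (Uc : D → ℝ) (hUc : ∀ p, 0 ≤ Uc p)
    (F : D → Fin (m + 1) → ℝ) (hF : ∀ p, F p = Fin.snoc (G p) (Uc p))
    (pstar : D) (hfeas : Uc pstar = 0) :
    (¬ ∃ p : D, Dom (F p) (F pstar)) ↔
      (¬ ∃ p : D, Uc p = 0 ∧ Dom (G p) (G pstar)) := by
  constructor
  · rintro h ⟨p, hp0, hle, j, hj⟩
    refine h ⟨p, ?_, ⟨j.castSucc, ?_⟩⟩
    · intro i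
      rw [hF, hF]
      refine Fin.lastCases ?_ ?_ i
      · simp [hp0, hfeas]
      · intro i; simp [hle i]
    · rw [hF, hF]; simpa using hj
  · rintro h ⟨p, hle, j, hj⟩
    rw [hF, hF] at hle hj
    have hp0 : Uc p = 0 := by
      have := hle (Fin.last m)
      simp [hfeas] at this
      exact le_antisymm this (hUc p)
    refine h ⟨p, hp0, fun i => ?_, ?_⟩
    · have := hle i.castSucc; simpa using this
    · induction j using Fin.lastCases with
      | last => simp [hp0, hfeas] at hj
      | cast i => exact ⟨i, by simpa using hj⟩
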